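/- Let $\sigma^2\ge0$, $\alpha,\beta\ge0$, let $w:\mathbb{R}\to\mathbb{R}$ be an even bounded $C^1$ function, and let $b,p:\mathbb{R}\to\mathbb{R}$ be odd bounded $C^1$ functions. Let $f:\mathbb{R}^2\times[0,T]\to[0,\infty)$ be continuously differentiable in all variables, twice continuously differentiable in $(\rho,R)$, with $\operatorname{supp} f(\cdot,\cdot,t)$ contained in one fixed compact set $K\subset\mathbb{R}^2$ for all $t\in[0,T]$, and satisfying pointwise the Fokker-Planck equation $\partial_t f = -\partial_R(a[f]f) - \partial_\rho(c[f]f) + \tfrac{\sigma^2}{2}\,d[f]\,\partial^2_\rho f$, where $a[f](\rho,R,t)=\int w(R-R')(b(\rho-\rho')-b(R-R'))f(\rho',R',t)\,d\rho'dR'$, $c[f](\rho,R,t)=\int w(R-R')\big(\alpha(1+b(\rho'-\rho))+\beta p(\rho'-\rho)\big)f(\rho',R',t)\,d\rho'dR'$, and $d[f](R,t)=\int w(R-R')f(\rho',R',t)\,d\rho'dR'$. Then for all $t\in(0,T)$, $\frac{d}{dt}\int_{\mathbb{R}^2}\rho\, f(\rho,R,t)\,d\rho\,dR \;=\; \alpha\int_{\mathbb{R}^4}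 w(R-R')\,f(\rho,R,t)\,f(\rho',R',t)\,d\rho'\,dR'\,d\rho\,dR$. -/

import Mathlib

/-!
Differentiating under the integral sign (all supports lie in the fixed compact set `K`), the
derivative of the mean strength is `∫ ρ · (right-hand side)`. Integrating by parts, the transport
in `R` and the diffusion in `ρ` contribute nothing, while the transport in `ρ` contributes
`∫ c[f] f`. The kernel of `c[f]` is `α w(R - R')` plus
`w(R - R') (α b(ρ' - ρ) + β p(ρ' - ρ))`; since `w` is even and `b`, `p` are odd, the second part is
antisymmetric under `(ρ, R) ↔ (ρ', R')`, so its contribution `∫∫ (…) f f'` vanishes.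
-/

open MeasureTheory Function Set Filter Topology

section OneDimensional

variable {φ : ℝ → ℝ}

theorem integral_deriv_eq_zero_of_hasCompactSupport (hφ : ContDiff ℝ 1 φ)
    (hφc : HasCompactSupport φ) : ∫ x, deriv φ x = 0 :=
  integral_eq_zero_of_hasDerivAt_of_integrable
    (fun x => (hφ.differentiable one_ne_zero x).hasDerivAt)
    ((hφ.continuous_deriv le_rfl).integrable_of_hasCompactSupport hφc.deriv)
    (hφ.continuous.integrable_of_hasCompactSupport hφc)

theorem integral_mul_deriv_eq_neg_integral_of_hasCompactSupport (hφ : ContDiff ℝ 1 φ)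
    (hφc : HasCompactSupport φ) : ∫ x, x * deriv φ x = -∫ x, φ x := by
  have hφ' := hφ.continuous_deriv le_rfl
  simpa using integral_mul_deriv_eq_deriv_mul_of_integrable (u := id) (u' := fun _ => 1)
    (fun x _ => hasDerivAt_id x) (fun x _ => (hφ.differentiable one_ne_zero x).hasDerivAt)
    ((continuous_id.mul hφ').integrable_of_hasCompactSupport hφc.deriv.mul_left)
    ((continuous_const.mul hφ.continuous).integrable_of_hasCompactSupport hφc.mul_left)
    ((continuous_id.mul hφ.continuous).integrable_of_hasCompactSupport hφc.mul_left)

end OneDimensional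

theorem deriv_comp_eq_zero_of_notMem_tsupport {E : Type*} [TopologicalSpace E] {P : E → ℝ}
    {γ : ℝ → E} {s : ℝ} (hγ : ContinuousAt γ s) (hs : γ s ∉ tsupport P) :
    deriv (fun r => P (γ r)) s = 0 := by
  have hzero : (fun r => P (γ r)) =ᶠ[𝓝 s] fun _ => 0 :=
    hγ.eventually (notMem_tsupport_iff_eventuallyEq.mp hs)
  rw [hzero.deriv_eq, deriv_const]

section PartialDerivatives

variable {P : ℝ × ℝ → ℝ}

theorem HasCompactSupport.deriv_fst (hP : HasCompactSupport P) :
    HasCompactSupport fun x : ℝ × ℝ => deriv (fun q => P (q, x.2)) x.1 :=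
  HasCompactSupport.intro' hP (isClosed_tsupport P) fun x hx =>
    deriv_comp_eq_zero_of_notMem_tsupport (γ := fun q => (q, x.2)) (by fun_prop) hx

theorem HasCompactSupport.deriv_snd (hP : HasCompactSupport P) :
    HasCompactSupport fun x : ℝ × ℝ => deriv (fun r => P (x.1, r)) x.2 :=
  HasCompactSupport.intro' hP (isClosed_tsupport P) fun x hx =>
    deriv_comp_eq_zero_of_notMem_tsupport (γ := fun r => (x.1, r)) (by fun_prop) hx

theorem ContDiff.deriv_fst {m n : WithTop ℕ∞} (hP : ContDiff ℝ m P) (hnm : n + 1 ≤ m) :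
    ContDiff ℝ n fun x : ℝ × ℝ => deriv (fun q => P (q, x.2)) x.1 :=
  (ContDiff.fderiv (f := fun (x : ℝ × ℝ) q => P (q, x.2)) (by fun_prop) contDiff_fst hnm).clm_apply
    contDiff_const

theorem ContDiff.deriv_snd {m n : WithTop ℕ∞} (hP : ContDiff ℝ m P) (hnm : n + 1 ≤ m) :
    ContDiff ℝ n fun x : ℝ × ℝ => deriv (fun r => P (x.1, r)) x.2 :=
  (ContDiff.fderiv (f := fun (x : ℝ × ℝ) r => P (x.1, r)) (by fun_prop) contDiff_snd hnm).clm_apply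
    contDiff_const

theorem HasCompactSupport.comp_prodMk (hP : HasCompactSupport P) (ρ : ℝ) :
    HasCompactSupport fun r => P (ρ, r) :=
  HasCompactSupport.intro (hP.image continuous_snd) fun r hr =>
    image_eq_zero_of_notMem_tsupport fun h => hr ⟨(ρ, r), h, rfl⟩

theorem HasCompactSupport.comp_prodMk_left (hP : HasCompactSupport P) (R : ℝ) :
    HasCompactSupport fun q => P (q, R) :=
  HasCompactSupport.intro (hP.image continuous_fst) fun q hq =>
    image_eq_zero_of_notMem_tsupport fun h => hq ⟨(q, R), h, rfl⟩

theorem integrable_fst_mul {φ : ℝ × ℝ → ℝ} (hφ : Continuous φ) (hφc : HasCompactSupport φ) :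
    Integrable fun x : ℝ × ℝ => x.1 * φ x :=
  (continuous_fst.mul hφ).integrable_of_hasCompactSupport hφc.mul_left

end PartialDerivatives

section FirstMoment

variable {P : ℝ × ℝ → ℝ}

theorem integral_fst_mul_deriv_snd_eq_zero (hP : ContDiff ℝ 1 P) (hPc : HasCompactSupport P) :
    ∫ x : ℝ × ℝ, x.1 * deriv (fun r => P (x.1, r)) x.2 = 0 := by
  have hint := integrable_fst_mul (hP.deriv_snd (n := 0) (by norm_num)).continuous hPc.deriv_snd
  rw [Measure.volume_eq_prod] at hint ⊢
  rw [integral_prod _ hint]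
  refine integral_eq_zero_of_ae (ae_of_all _ fun ρ => ?_)
  change ∫ R, ρ * deriv (fun r => P (ρ, r)) R = 0
  rw [integral_const_mul, integral_deriv_eq_zero_of_hasCompactSupport (by fun_prop)
    (hPc.comp_prodMk ρ), mul_zero]

theorem integral_fst_mul_deriv_fst (hP : ContDiff ℝ 1 P) (hPc : HasCompactSupport P) :
    ∫ x : ℝ × ℝ, x.1 * deriv (fun q => P (q, x.2)) x.1 = -∫ x, P x := by
  have hint := integrable_fst_mul (hP.deriv_fst (n := 0) (by norm_num)).continuous hPc.deriv_fst
  have hPint : Integrable P := hP.continuous.integrable_of_hasCompactSupport hPc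
  rw [Measure.volume_eq_prod] at hint hPint ⊢
  rw [integral_prod_symm _ hint, integral_prod_symm _ hPint, ← integral_neg]
  refine integral_congr_ae (ae_of_all _ fun R => ?_)
  exact integral_mul_deriv_eq_neg_integral_of_hasCompactSupport (by fun_prop)
    (hPc.comp_prodMk_left R)

theorem integral_fst_mul_deriv_deriv_fst_eq_zero (hP : ContDiff ℝ 2 P)
    (hPc : HasCompactSupport P) {c : ℝ → ℝ} (hc : Continuous c) :
    ∫ x : ℝ × ℝ, x.1 * (c x.2 * deriv (deriv fun q => P (q, x.2)) x.1) = 0 := by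
  have hP' : ContDiff ℝ 1 fun x : ℝ × ℝ => deriv (fun q => P (q, x.2)) x.1 :=
    hP.deriv_fst (by norm_num)
  have hint : Integrable fun x : ℝ × ℝ => x.1 * (c x.2 * deriv (deriv fun q => P (q, x.2)) x.1) :=
    integrable_fst_mul
      ((hc.comp continuous_snd).mul (hP'.deriv_fst (n := 0) (by norm_num)).continuous)
      hPc.deriv_fst.deriv_fst.mul_left
  rw [Measure.volume_eq_prod] at hint ⊢
  rw [integral_prod_symm _ hint]
  refine integral_eq_zero_of_ae (ae_of_all _ fun R => ?_)
  change ∫ ρ, ρ * (c R * deriv (deriv fun q => P (q, R)) ρ) = 0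
  have hslice : ContDiff ℝ 1 fun q => P (q, R) :=
    (hP.of_le one_le_two).comp (contDiff_id.prodMk contDiff_const)
  have hslice' : ContDiff ℝ 1 (deriv fun q => P (q, R)) :=
    hP'.comp (contDiff_id.prodMk contDiff_const)
  calc ∫ ρ, ρ * (c R * deriv (deriv fun q => P (q, R)) ρ)
      = c R * ∫ ρ, ρ * deriv (deriv fun q => P (q, R)) ρ := by
        rw [← integral_const_mul]
        exact integral_congr_ae (ae_of_all _ fun ρ => by ring)
    _ = 0 := by
        rw [integral_mul_deriv_eq_neg_integral_of_hasCompactSupport hslice'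
            (hPc.deriv_fst.comp_prodMk_left R),
          integral_deriv_eq_zero_of_hasCompactSupport hslice (hPc.comp_prodMk_left R)]
        simp

end FirstMoment

theorem HasCompactSupport.prod_mul {X Y : Type*} [TopologicalSpace X] [T2Space X]
    [TopologicalSpace Y] [T2Space Y] {f : X → ℝ} {g : Y → ℝ} (hf : HasCompactSupport f)
    (hg : HasCompactSupport g) : HasCompactSupport fun z : X × Y => f z.1 * g z.2 :=
  HasCompactSupport.intro (hf.prod hg) fun z hz => by
    rcases not_and_or.mp hz with h | h
    · rw [image_eq_zero_of_notMem_tsupport h, zero_mul]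
    · rw [image_eq_zero_of_notMem_tsupport h, mul_zero]

theorem integral_integral_mul_eq_zero_of_antisymm {X : Type*} [TopologicalSpace X] [T2Space X]
    [MeasurableSpace X] [OpensMeasurableSpace X] {μ : Measure X} [IsFiniteMeasureOnCompacts μ]
    {k : X → X → ℝ} (hk : Continuous (uncurry k)) (hanti : ∀ x y, k y x = -k x y)
    {g : X → ℝ} (hg : Continuous g) (hgc : HasCompactSupport g) :
    ∫ x, (∫ y, k x y * g y ∂μ) * g x ∂μ = 0 := by
  set I := ∫ x, ∫ y, k x y * (g x * g y) ∂μ ∂μ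
  have hswap : I = ∫ y, ∫ x, k x y * (g x * g y) ∂μ ∂μ :=
    integral_integral_swap_of_hasCompactSupport
      (hk.mul ((hg.comp continuous_fst).mul (hg.comp continuous_snd))) (hgc.prod_mul hgc).mul_left
  have hneg : ∫ y, ∫ x, k x y * (g x * g y) ∂μ ∂μ = -I := by
    rw [← integral_neg]
    congr 1 with y
    rw [← integral_neg]
    congr 1 with x
    rw [hanti y x]
    ring
  calc ∫ x, (∫ y, k x y * g y ∂μ) * g x ∂μ = I := by
        congr 1 with x
        rw [← integral_mul_const]
        congr 1 with y
        ring
    _ = 0 := by linarith [hswap.trans hneg]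

theorem contDiff_integral_sub_mul {E : Type*} [NormedAddCommGroup E] [NormedSpace ℝ E]
    [MeasurableSpace E] [BorelSpace E] [SecondCountableTopology E] {μ : Measure E}
    [IsLocallyFiniteMeasure μ] [μ.IsAddLeftInvariant] [μ.IsNegInvariant] {n : ℕ∞}
    {k g : E → ℝ} (hk : Continuous k) (hg : ContDiff ℝ n g) (hgc : HasCompactSupport g) :
    ContDiff ℝ n fun x => ∫ y, k (x - y) * g y ∂μ := by
  have hconv := hgc.contDiff_convolution_left (ContinuousLinearMap.mul ℝ ℝ) hg
    (hk.locallyIntegrable (μ := μ))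
  convert hconv using 2 with x
  rw [convolution_def]
  congr 1 with y
  exact mul_comm _ _

theorem hasDerivAt_integral_of_contDiff_of_support_subset {E : Type*} [NormedAddCommGroup E]
    [NormedSpace ℝ E] [MeasurableSpace E] [BorelSpace E] {μ : Measure E}
    [IsFiniteMeasureOnCompacts μ] {F : E → ℝ → ℝ} (hF : ContDiff ℝ 1 (uncurry F))
    {K : Set E} (hK : IsCompact K) {s : Set ℝ} {t : ℝ} (hs : s ∈ 𝓝 t)
    (hsupp : ∀ τ ∈ s, support (F · τ) ⊆ K) :
    HasDerivAt (fun τ => ∫ x, F x τ ∂μ) (∫ x, deriv (F x) t ∂μ) t := by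
  obtain ⟨ε, hε, hball⟩ := Metric.nhds_basis_closedBall.mem_iff.mp hs
  have hF' : Continuous fun z : E × ℝ => deriv (F z.1) z.2 :=
    (ContDiff.fderiv (f := fun z : E × ℝ => F z.1) (n := 0)
      (hF.comp (contDiff_fst.fst.prodMk contDiff_snd)) contDiff_snd
      (by norm_num)).continuous.clm_apply continuous_const
  obtain ⟨M, hM⟩ :=
    (hK.prod (isCompact_closedBall t ε)).exists_bound_of_continuousOn hF'.continuousOn
  have hderiv : ∀ x τ, HasDerivAt (F x) (deriv (F x) τ) τ := fun x τ =>
    ((hF.comp (contDiff_const.prodMk contDiff_id)).differentiable one_ne_zero τ).hasDerivAt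
  have hbound : ∀ x, ∀ τ ∈ Metric.ball t ε, ‖deriv (F x) τ‖ ≤ K.indicator (fun _ => M) x := by
    intro x τ hτ
    by_cases hx : x ∈ K
    · rw [indicator_of_mem hx]
      exact hM (x, τ) ⟨hx, Metric.ball_subset_closedBall hτ⟩
    · have hzero : F x =ᶠ[𝓝 τ] fun _ => 0 := by
        filter_upwards [Metric.isOpen_ball.mem_nhds hτ] with τ' hτ'
        exact notMem_support.mp fun h => hx (hsupp τ' (hball (Metric.ball_subset_closedBall hτ')) h)
      rw [indicator_of_notMem hx, hzero.deriv_eq, deriv_const, norm_zero]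
  have hcont : ∀ τ, Continuous (F · τ) := fun τ =>
    hF.continuous.comp (continuous_id.prodMk continuous_const)
  exact (hasDerivAt_integral_of_dominated_loc_of_deriv_le (Metric.ball_mem_nhds t hε)
    (Eventually.of_forall fun τ => (hcont τ).aestronglyMeasurable)
    ((hcont t).integrable_of_hasCompactSupport (HasCompactSupport.intro hK fun x hx =>
      notMem_support.mp fun h => hx (hsupp t (mem_of_mem_nhds hs) h)))
    (hF'.comp (continuous_id.prodMk continuous_const)).aestronglyMeasurable
    (ae_of_all _ hbound)
    ((integrable_indicator_iff hK.measurableSet).mpr (integrableOn_const hK.measure_lt_top.ne))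
    (ae_of_all _ fun x τ _ => hderiv x τ)).2

/-- `ratingDrift`, `strengthDrift` and `interactionRate` are the coefficients `a[f]`, `c[f]`, `d[f]`
of the paper, and `eloOperator` is the right-hand side of the Fokker–Planck equation, all evaluated
on a density `g = f(·, ·, t)` of `x = (ρ, R)`. -/
noncomputable def ratingDrift (w b : ℝ → ℝ) (g : ℝ × ℝ → ℝ) (x : ℝ × ℝ) : ℝ :=
  ∫ y : ℝ × ℝ, w (x.2 - y.2) * (b (x.1 - y.1) - b (x.2 - y.2)) * g y

noncomputable def strengthDrift (α β : ℝ) (w b p : ℝ → ℝ) (g : ℝ × ℝ → ℝ) (x : ℝ × ℝ) : ℝ :=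
  ∫ y : ℝ × ℝ, w (x.2 - y.2) * (α * (1 + b (y.1 - x.1)) + β * p (y.1 - x.1)) * g y

noncomputable def interactionRate (w : ℝ → ℝ) (g : ℝ × ℝ → ℝ) (R : ℝ) : ℝ :=
  ∫ y : ℝ × ℝ, w (R - y.2) * g y

noncomputable def eloOperator (σ2 α β : ℝ) (w b p : ℝ → ℝ) (g : ℝ × ℝ → ℝ) (x : ℝ × ℝ) : ℝ :=
  -deriv (fun r => ratingDrift w b g (x.1, r) * g (x.1, r)) x.2
    - deriv (fun q => strengthDrift α β w b p g (q, x.2) * g (q, x.2)) x.1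
    + σ2 / 2 * interactionRate w g x.2 * deriv (deriv fun q => g (q, x.2)) x.1

section Coefficients

variable {α β : ℝ} {w b p : ℝ → ℝ} {g : ℝ × ℝ → ℝ} {n : ℕ∞}

theorem contDiff_ratingDrift (hw : Continuous w) (hb : Continuous b) (hg : ContDiff ℝ n g)
    (hgc : HasCompactSupport g) : ContDiff ℝ n (ratingDrift w b g) :=
  contDiff_integral_sub_mul (μ := volume) (k := fun u : ℝ × ℝ => w u.2 * (b u.1 - b u.2))
    (by fun_prop) hg hgc

theorem contDiff_strengthDrift (hw : Continuous w) (hb : Continuous b) (hp : Continuous p)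
    (hg : ContDiff ℝ n g) (hgc : HasCompactSupport g) :
    ContDiff ℝ n (strengthDrift α β w b p g) := by
  unfold strengthDrift
  convert contDiff_integral_sub_mul (μ := volume)
    (k := fun u : ℝ × ℝ => w u.2 * (α * (1 + b (-u.1)) + β * p (-u.1))) (by fun_prop) hg hgc
    using 3 with x y
  simp only [Prod.fst_sub, Prod.snd_sub, neg_sub]

theorem contDiff_interactionRate_snd (hw : Continuous w) (hg : ContDiff ℝ n g)
    (hgc : HasCompactSupport g) : ContDiff ℝ n fun x : ℝ × ℝ => interactionRate w g x.2 :=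
  contDiff_integral_sub_mul (μ := volume) (k := fun u : ℝ × ℝ => w u.2) (by fun_prop) hg hgc

theorem continuous_interactionRate (hw : Continuous w) (hg : Continuous g)
    (hgc : HasCompactSupport g) : Continuous (interactionRate w g) :=
  (contDiff_interactionRate_snd (n := 0) hw (contDiff_zero.mpr hg) hgc).continuous.comp
    (continuous_const.prodMk continuous_id : Continuous fun R : ℝ => ((0 : ℝ), R))

end Coefficients

section FirstMomentOfEloOperator

variable {α β : ℝ} {w b p : ℝ → ℝ} {g : ℝ × ℝ → ℝ}

theorem integral_strengthDrift_mul (hw_even : ∀ z, w (-z) = w z) (hw : Continuous w)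
    (hb_odd : ∀ z, b (-z) = -b z) (hb : Continuous b) (hp_odd : ∀ z, p (-z) = -p z)
    (hp : Continuous p) (hg : ContDiff ℝ 1 g) (hgc : HasCompactSupport g) :
    ∫ x, strengthDrift α β w b p g x * g x = α * ∫ x, interactionRate w g x.2 * g x := by
  set k : ℝ × ℝ → ℝ × ℝ → ℝ := fun x y => w (x.2 - y.2) * (α * b (y.1 - x.1) + β * p (y.1 - x.1))
  have hint : ∀ {φ : ℝ × ℝ → ℝ}, Continuous φ → Integrable fun y => φ y * g y := fun hφ =>
    (hφ.mul hg.continuous).integrable_of_hasCompactSupport hgc.mul_left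
  have hsplit : ∀ x,
      strengthDrift α β w b p g x = α * interactionRate w g x.2 + ∫ y, k x y * g y := by
    intro x
    rw [interactionRate, ← integral_const_mul, ← integral_add
      ((hint (by fun_prop : Continuous fun y : ℝ × ℝ => w (x.2 - y.2))).const_mul α)
      (hint (by fun_prop : Continuous (k x)))]
    exact integral_congr_ae (ae_of_all _ fun y => by ring)
  have hodd : ∫ x, (∫ y, k x y * g y) * g x = 0 := by
    refine integral_integral_mul_eq_zero_of_antisymm (by fun_prop) (fun x y => ?_) hg.continuous hgc
    simp only [k]
    rw [← neg_sub x.2 y.2, hw_even, ← neg_sub y.1 x.1, hb_odd, hp_odd]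
    ring
  rw [← sub_eq_zero, ← integral_const_mul, ← integral_sub
    (hint (contDiff_strengthDrift hw hb hp hg hgc).continuous)
    ((hint (continuous_interactionRate hw hg.continuous hgc).snd').const_mul α)]
  refine (integral_congr_ae (ae_of_all _ fun x => ?_)).trans hodd
  rw [hsplit]
  ring

theorem integral_fst_mul_eloOperator (σ2 : ℝ) (hw_even : ∀ z, w (-z) = w z) (hw : Continuous w)
    (hb_odd : ∀ z, b (-z) = -b z) (hb : Continuous b) (hp_odd : ∀ z, p (-z) = -p z)
    (hp : Continuous p) (hg : ContDiff ℝ 2 g) (hgc : HasCompactSupport g) :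
    ∫ x, x.1 * eloOperator σ2 α β w b p g x = α * ∫ x, interactionRate w g x.2 * g x := by
  have hg1 : ContDiff ℝ 1 g := hg.of_le one_le_two
  have hA : ContDiff ℝ 1 fun x => ratingDrift w b g x * g x :=
    (contDiff_ratingDrift hw hb hg1 hgc).mul hg1
  have hC : ContDiff ℝ 1 fun x => strengthDrift α β w b p g x * g x :=
    (contDiff_strengthDrift hw hb hp hg1 hgc).mul hg1
  have hd : Continuous fun R => σ2 / 2 * interactionRate w g R :=
    continuous_const.mul (continuous_interactionRate hw hg1.continuous hgc)
  have hT1 := integrable_fst_mul (hA.deriv_snd (n := 0) (by norm_num)).continuous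
    hgc.mul_left.deriv_snd
  have hT2 := integrable_fst_mul (hC.deriv_fst (n := 0) (by norm_num)).continuous
    hgc.mul_left.deriv_fst
  have hT3 : Integrable fun x : ℝ × ℝ =>
      x.1 * (σ2 / 2 * interactionRate w g x.2 * deriv (deriv fun q => g (q, x.2)) x.1) :=
    integrable_fst_mul ((hd.comp continuous_snd).mul
      ((hg.deriv_fst (n := 1) (by norm_num)).deriv_fst (n := 0) (by norm_num)).continuous)
      hgc.deriv_fst.deriv_fst.mul_left
  simp only [eloOperator, mul_add, mul_sub, mul_neg]
  rw [integral_add ?_ hT3, integral_sub ?_ hT2, integral_neg,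
    integral_fst_mul_deriv_snd_eq_zero hA hgc.mul_left, integral_fst_mul_deriv_fst hC hgc.mul_left,
    integral_fst_mul_deriv_deriv_fst_eq_zero hg hgc hd,
    integral_strengthDrift_mul hw_even hw hb_odd hb hp_odd hp hg1 hgc]
  · ring
  · exact hT1.neg
  · exact hT1.neg.sub hT2

end FirstMomentOfEloOperator

theorem elo_fokker_planck_mean_strength_evolution_general
    (σ2 T α β : ℝ)
    (w b p : ℝ → ℝ)
    (hw_even : ∀ z, w (-z) = w z) (hw_smooth : ContDiff ℝ 1 w)
    (hb_odd : ∀ z, b (-z) = -b z) (hb_smooth : ContDiff ℝ 1 b)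
    (hp_odd : ∀ z, p (-z) = -p z) (hp_smooth : ContDiff ℝ 1 p)
    (f : ℝ → ℝ → ℝ → ℝ)  -- arguments: ρ, R, t
    (hf_C1 : ContDiff ℝ 1 (fun q : ℝ × ℝ × ℝ => f q.1 q.2.1 q.2.2))
    (hf_C2 : ∀ t, ContDiff ℝ 2 (fun x : ℝ × ℝ => f x.1 x.2 t))
    (K : Set (ℝ × ℝ)) (hK : IsCompact K)
    (hsupp : ∀ t ∈ Set.Icc (0 : ℝ) T,
      Function.support (fun x : ℝ × ℝ => f x.1 x.2 t) ⊆ K)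
    (hpde : ∀ (ρ R t : ℝ), 0 < t → t < T →
      deriv (fun s => f ρ R s) t
        = -(deriv (fun r =>
              (∫ y : ℝ × ℝ, w (r - y.2) * (b (ρ - y.1) - b (r - y.2)) *
                f y.1 y.2 t) * f ρ r t) R)
          - deriv (fun q =>
              (∫ y : ℝ × ℝ, w (R - y.2) *
                  (α * (1 + b (y.1 - q)) + β * p (y.1 - q)) * f y.1 y.2 t) *
                f q R t) ρ
          + σ2 / 2 * (∫ y : ℝ × ℝ, w (R - y.2) * f y.1 y.2 t) *
              deriv (deriv (fun q => f q R t)) ρ) :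
    ∀ t : ℝ, 0 < t → t < T →
      deriv (fun s => ∫ x : ℝ × ℝ, x.1 * f x.1 x.2 s) t
        = α * ∫ x : ℝ × ℝ, (∫ y : ℝ × ℝ, w (x.2 - y.2) * f y.1 y.2 t) *
            f x.1 x.2 t := by
  intro t ht0 htT
  have hderiv := hasDerivAt_integral_of_contDiff_of_support_subset (μ := volume)
    (F := fun (x : ℝ × ℝ) τ => x.1 * f x.1 x.2 τ)
    (contDiff_fst.fst.mul (hf_C1.comp (by fun_prop :
      ContDiff ℝ 1 fun z : (ℝ × ℝ) × ℝ => (z.1.1, z.1.2, z.2))))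
    hK (Ioo_mem_nhds ht0 htT)
    fun τ hτ => (support_mul_subset_right _ _).trans (hsupp τ (Ioo_subset_Icc_self hτ))
  have hgc : HasCompactSupport fun x : ℝ × ℝ => f x.1 x.2 t :=
    HasCompactSupport.intro hK fun x hx =>
      notMem_support.mp fun h => hx (hsupp t ⟨ht0.le, htT.le⟩ h)
  rw [hderiv.deriv]
  calc ∫ x : ℝ × ℝ, deriv (fun τ => x.1 * f x.1 x.2 τ) t
      = ∫ x : ℝ × ℝ, x.1 * eloOperator σ2 α β w b p (fun x => f x.1 x.2 t) x := by
        congr 1 with x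
        rw [deriv_const_mul_field']
        exact congrArg _ (hpde x.1 x.2 t ht0 htT)
    _ = _ := integral_fst_mul_eloOperator σ2 hw_even hw_smooth.continuous hb_odd
        hb_smooth.continuous hp_odd hp_smooth.continuous (hf_C2 t) hgc

/-- Evolution of the mean intrinsic strength for classical, compactly supported
solutions of the nonlinear nonlocal Fokker-Planck Elo equation with learning
kernel `α(1 + b) + β p`: the odd parts cancel and
`d/dt ∫ ρ f = α ∫∫ w(R - R') f f'`. -/
theorem elo_fokker_planck_mean_strength_evolution
    (σ2 T α β : ℝ) (hσ : 0 ≤ σ2) (hT : 0 < T) (hα : 0 ≤ α) (hβ : 0 ≤ β)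
    (w b p : ℝ → ℝ)
    (hw_even : ∀ z, w (-z) = w z) (hw_smooth : ContDiff ℝ 1 w)
    (Cw : ℝ) (hw_bdd : ∀ z, |w z| ≤ Cw)
    (hb_odd : ∀ z, b (-z) = -b z) (hb_smooth : ContDiff ℝ 1 b)
    (Cb : ℝ) (hb_bdd : ∀ z, |b z| ≤ Cb)
    (hp_odd : ∀ z, p (-z) = -p z) (hp_smooth : ContDiff ℝ 1 p)
    (Cp : ℝ) (hp_bdd : ∀ z, |p z| ≤ Cp)
    (f : ℝ → ℝ → ℝ → ℝ)  -- arguments: ρ, R, t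
    (hf_nonneg : ∀ ρ R t, 0 ≤ f ρ R t)
    (hf_C1 : ContDiff ℝ 1 (fun q : ℝ × ℝ × ℝ => f q.1 q.2.1 q.2.2))
    (hf_C2 : ∀ t, ContDiff ℝ 2 (fun x : ℝ × ℝ => f x.1 x.2 t))
    (K : Set (ℝ × ℝ)) (hK : IsCompact K)
    (hsupp : ∀ t ∈ Set.Icc (0 : ℝ) T,
      Function.support (fun x : ℝ × ℝ => f x.1 x.2 t) ⊆ K)
    (hpde : ∀ (ρ R t : ℝ), 0 < t → t < T →
      deriv (fun s => f ρ R s) t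
        = -(deriv (fun r =>
              (∫ y : ℝ × ℝ, w (r - y.2) * (b (ρ - y.1) - b (r - y.2)) *
                f y.1 y.2 t) * f ρ r t) R)
          - deriv (fun q =>
              (∫ y : ℝ × ℝ, w (R - y.2) *
                  (α * (1 + b (y.1 - q)) + β * p (y.1 - q)) * f y.1 y.2 t) *
                f q R t) ρ
          + σ2 / 2 * (∫ y : ℝ × ℝ, w (R - y.2) * f y.1 y.2 t) *
              deriv (deriv (fun q => f q R t)) ρ) :
    ∀ t : ℝ, 0 < t → t < T →
      deriv (fun s => ∫ x : ℝ × ℝ, x.1 * f x.1 x.2 s) t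
        = α * ∫ x : ℝ × ℝ, (∫ y : ℝ × ℝ, w (x.2 - y.2) * f y.1 y.2 t) *
            f x.1 x.2 t :=
  elo_fokker_planck_mean_strength_evolution_general σ2 T α β w b p hw_even hw_smooth hb_odd
    hb_smooth hp_odd hp_smooth f hf_C1 hf_C2 K hK hsupp hpde
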